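/- Let n ≥ 1, let Q = D_{2n} be the dihedral group of order 2n, let P be a subgroup of Q of order 2 generated by a reflection, let (id_P : P → P) be the identity crossed module on P, and let ι : P → Q be the inclusion. Then for any induced crossed module (∂ : I → Q, j) of (id_P : P → P) along ι, the group I is isomorphic to D_{2n}. Moreover, if n is odd then ∂ : I → Q is an isomorphism, while if n is even then ker ∂ has order 2 and the image of ∂ has index 2 in Q. -/

import Mathlib

universe u

/-- A crossed module `(μ : M → P)`: groups `M`, `P`, a (right) action of `P` on `M` by
group automorphisms, written `act m p` for `m ^ p`, and a homomorphism `μ : M →* P`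
satisfying CM1: `μ (m ^ p) = p⁻¹ * μ m * p` and CM2: `n ^ (μ m) = m⁻¹ * n * m`. -/
structure CrossedModule (M P : Type u) [Group M] [Group P] where
  μ : M →* P
  act : M → P → M
  act_mul : ∀ m n p, act (m * n) p = act m p * act n p
  act_one : ∀ m, act m 1 = m
  act_act : ∀ m p q, act (act m p) q = act m (p * q)
  cm1 : ∀ m p, μ (act m p) = p⁻¹ * μ m * p
  cm2 : ∀ m n, act n (μ m) = m⁻¹ * n * m

/-- A morphism of crossed modules `(f, g) : (μ : M → P) → (ν : N → Q)`:
group homomorphisms `f : M → N`, `g : P → Q` with `ν ∘ f = g ∘ μ` and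
`f (m ^ p) = (f m) ^ (g p)`. -/
def CrossedModule.IsMorphism {M P N Q : Type u} [Group M] [Group P] [Group N] [Group Q]
    (X : CrossedModule M P) (Y : CrossedModule N Q) (f : M →* N) (g : P →* Q) : Prop :=
  (∀ m, Y.μ (f m) = g (X.μ m)) ∧ ∀ m p, f (X.act m p) = Y.act (f m) (g p)

/-- `(∂ : I → Q)` together with `j : M → I` is an induced crossed module of `(μ : M → P)`
along `ι : P → Q`: `(j, ι)` is a morphism of crossed modules, and for every crossed module
`(ν : N → Q)` and morphism `(f, ι) : (μ : M → P) → (ν : N → Q)` there is a unique group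
homomorphism `φ : I → N` with `ν ∘ φ = ∂`, `φ (x ^ q) = (φ x) ^ q`, and `φ ∘ j = f`. -/
def IsInducedCrossedModule {M P Q I : Type u} [Group M] [Group P] [Group Q] [Group I]
    (X : CrossedModule M P) (ι : P →* Q) (Y : CrossedModule I Q) (j : M →* I) : Prop :=
  CrossedModule.IsMorphism X Y j ι ∧
  ∀ (N : Type u) [Group N] (Z : CrossedModule N Q) (f : M →* N),
    CrossedModule.IsMorphism X Z f ι →
    ∃! φ : I →* N, (∀ x, Z.μ (φ x) = Y.μ x) ∧
      (∀ x q, φ (Y.act x q) = Z.act (φ x) q) ∧ ∀ m, φ (j m) = f m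

/-- The identity crossed module `(id_P : P → P)` with `P` acting on itself by
conjugation, `m ^ p = p⁻¹ * m * p`. -/
def conjCM (P : Type u) [Group P] : CrossedModule P P where
  μ := MonoidHom.id P
  act m p := p⁻¹ * m * p
  act_mul m n p := by group
  act_one m := by group
  act_act m p q := by group
  cm1 m p := rfl
  cm2 m n := rfl


/-!
Induced crossed modules are unique up to isomorphism over `Q`, so it suffices to exhibit one.
If `(f, ι)` is a morphism into `(ν : N → Q)`, then `u = f (sr i)` is an involution with
`ν u = sr i` fixed by `sr i`, and by CM1 and CM2 its conjugates `v k = u ^ r k` satisfy the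
relations `v b * v a * v b = v (2b - a)` of the reflections `sr k` of `D_{2n}`. These relations
make `v k * v (k + 1)` independent of `k`, so `sr k ↦ v k` extends to a homomorphism
`D_{2n} → N`. Hence `D_{2n}` itself is the induced crossed module, with boundary
`r k ↦ r (2k)`, `sr k ↦ sr (i + 2k)`, whose kernel consists of the rotations `r k` with
`2k = 0`: trivial for odd `n`, and `{1, r (n/2)}` for even `n`.
-/

theorem conjCM_act_of_isMulCommutative {P : Type u} [Group P] [IsMulCommutative P] (m p : P) :
    (conjCM P).act m p = m := by
  change p⁻¹ * m * p = m
  rw [mul_comm' p⁻¹ m, inv_mul_cancel_right]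

theorem CrossedModule.act_one_left {M P : Type u} [Group M] [Group P] (X : CrossedModule M P)
    (q : P) : X.act 1 q = 1 := by
  simpa using X.act_mul 1 1 q

namespace IsInducedCrossedModule

variable {M P Q I I' : Type u} [Group M] [Group P] [Group Q] [Group I] [Group I']
  {X : CrossedModule M P} {ι : P →* Q} {Y : CrossedModule I Q} {j : M →* I}
  {Y' : CrossedModule I' Q} {j' : M →* I'}

theorem eq_id (h : IsInducedCrossedModule X ι Y j) {φ : I →* I}
    (hμ : ∀ x, Y.μ (φ x) = Y.μ x) (hact : ∀ x q, φ (Y.act x q) = Y.act (φ x) q)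
    (hj : ∀ m, φ (j m) = j m) : φ = MonoidHom.id I :=
  (h.2 I Y j h.1).unique ⟨hμ, hact, hj⟩ ⟨fun _ => rfl, fun _ _ => rfl, fun _ => rfl⟩

theorem exists_mulEquiv (h : IsInducedCrossedModule X ι Y j)
    (h' : IsInducedCrossedModule X ι Y' j') : ∃ e : I ≃* I', ∀ x, Y'.μ (e x) = Y.μ x := by
  obtain ⟨φ, ⟨hφμ, hφact, hφj⟩, -⟩ := h.2 I' Y' j' h'.1
  obtain ⟨ψ, ⟨hψμ, hψact, hψj⟩, -⟩ := h'.2 I Y j h.1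
  have hψφ : ψ.comp φ = MonoidHom.id I :=
    h.eq_id (fun x => by simp [hψμ, hφμ]) (fun x q => by simp [hφact, hψact])
      (fun m => by simp [hφj, hψj])
  have hφψ : φ.comp ψ = MonoidHom.id I' :=
    h'.eq_id (fun x => by simp [hψμ, hφμ]) (fun x q => by simp [hφact, hψact])
      (fun m => by simp [hφj, hψj])
  exact ⟨φ.toMulEquiv ψ hψφ hφψ, hφμ⟩

end IsInducedCrossedModule

theorem ZMod.induction_add_one {n : ℕ} {motive : ZMod n → Prop} (zero : motive 0)
    (add_one : ∀ k, motive k ↔ motive (k + 1)) (k : ZMod n) : motive k := by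
  obtain ⟨m, rfl⟩ := ZMod.intCast_surjective k
  induction m using Int.induction_on with
  | zero => simpa using zero
  | succ m ih => simpa using (add_one _).1 ih
  | pred m ih => exact (add_one _).2 (by simpa using ih)

theorem ZMod.add_self_eq_zero_iff_of_even {m : ℕ} [NeZero m] {k : ZMod (m + m)} :
    k + k = 0 ↔ k = 0 ∨ k = m := by
  constructor
  · intro h
    obtain ⟨c, hc⟩ : m + m ∣ k.val + k.val := by
      rwa [← ZMod.natCast_eq_zero_iff, Nat.cast_add, ZMod.natCast_zmod_val]
    have hc2 : c < 2 := by nlinarith [k.val_lt]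
    have hval : k.val = 0 ∨ k.val = m := by interval_cases c <;> omega
    rw [← ZMod.natCast_zmod_val k]
    rcases hval with hval | hval <;> simp [hval]
  · rintro (rfl | rfl)
    · exact add_zero 0
    · rw [← Nat.cast_add, ZMod.natCast_self]

-- The relations satisfied by the reflections `k ↦ sr k` of `D_{2n}`.
def IsReflectionFamily {G : Type*} [Group G] {n : ℕ} (v : ZMod n → G) : Prop :=
  ∀ a b, v b * v a * v b = v (b + b - a)

namespace IsReflectionFamily

variable {G : Type*} [Group G] {n : ℕ} {v : ZMod n → G}

theorem mul_self (hv : IsReflectionFamily v) (k : ZMod n) : v k * v k = 1 := by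
  simpa using hv k k

theorem mul_self_mul (hv : IsReflectionFamily v) (k : ZMod n) (x : G) : v k * (v k * x) = x := by
  rw [← mul_assoc, hv.mul_self, one_mul]

theorem mul_add_one (hv : IsReflectionFamily v) (k : ZMod n) : v k * v (k + 1) = v 0 * v 1 := by
  induction k using ZMod.induction_add_one with
  | zero => rw [zero_add]
  | add_one k =>
    rw [show k + 1 + 1 = (k + 1) + (k + 1) - k by ring, ← hv, mul_assoc, hv.mul_self_mul]

theorem mul_mul (hv : IsReflectionFamily v) (a b : ZMod n) : v a * v 0 * v b = v (a + b) := by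
  have hsucc (k : ZMod n) : v (k + 1) = v k * (v 0 * v 1) := by
    rw [← hv.mul_add_one k, hv.mul_self_mul]
  induction b using ZMod.induction_add_one with
  | zero => rw [mul_assoc, hv.mul_self, mul_one, add_zero]
  | add_one b => simp only [← add_assoc, hsucc, ← mul_assoc, mul_left_inj]

theorem mul (hv : IsReflectionFamily v) (a b : ZMod n) : v a * v b = v 0 * v (b - a) := by
  have hneg : v (-a) = v 0 * v a * v 0 := by rw [hv]; simp
  rw [show b - a = -a + b by ring, ← hv.mul_mul, hneg]
  simp only [mul_assoc, hv.mul_self_mul]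

end IsReflectionFamily

namespace DihedralGroup

variable {n : ℕ}

def liftReflections {G : Type*} [Group G] (v : ZMod n → G) (hv : IsReflectionFamily v) :
    DihedralGroup n →* G where
  toFun
    | r k => v 0 * v k
    | sr k => v k
  map_one' := hv.mul_self 0
  map_mul' := by
    rintro (a | a) (b | b)
    · simp only [r_mul_r, mul_assoc, ← hv.mul_mul]
    · rw [r_mul_sr, mul_assoc, hv.mul a b, hv.mul_self_mul]
    · simp only [sr_mul_r, ← mul_assoc, hv.mul_mul]
    · rw [sr_mul_sr, hv.mul a b]

theorem ext_hom_sr {G : Type*} [Group G] {φ ψ : DihedralGroup n →* G}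
    (h : ∀ k, φ (sr k) = ψ (sr k)) : φ = ψ := by
  ext (k | k)
  · rw [← sub_zero k, ← sr_mul_sr, map_mul, map_mul, h, h]
  · exact h k

def shiftReflections (c : ZMod n) : DihedralGroup n →* DihedralGroup n where
  toFun
    | r k => r k
    | sr k => sr (k + c)
  map_one' := rfl
  map_mul' := by
    rintro (a | a) (b | b) <;> simp only [r_mul_r, r_mul_sr, sr_mul_r, sr_mul_sr] <;> congr 1 <;>
      ring

theorem eq_one_or_eq_sr_of_mem_zpowers {i : ZMod n} (m : Subgroup.zpowers (sr i)) :
    m = 1 ∨ m = ⟨sr i, Subgroup.mem_zpowers _⟩ := by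
  obtain ⟨_, k, rfl⟩ := m
  rw [← Subtype.coe_inj, ← Subtype.coe_inj, Subgroup.coe_one]
  change _ ^ k = 1 ∨ _ ^ k = sr i
  rw [← zpow_mod_orderOf, orderOf_sr]
  rcases Int.emod_two_eq_zero_or_one k with h | h <;> simp [h]

variable (i : ZMod n)

def reflectionInducedBoundary : DihedralGroup n →* DihedralGroup n where
  toFun
    | r k => r (k + k)
    | sr k => sr (i + k + k)
  map_one' := congrArg r (add_zero 0)
  map_mul' := by
    rintro (a | a) (b | b) <;> simp only [r_mul_r, r_mul_sr, sr_mul_r, sr_mul_sr] <;> congr 1 <;>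
      ring

@[simp]
theorem reflectionInducedBoundary_r (k : ZMod n) : reflectionInducedBoundary i (r k) = r (k + k) :=
  rfl

@[simp]
theorem reflectionInducedBoundary_sr (k : ZMod n) :
    reflectionInducedBoundary i (sr k) = sr (i + k + k) :=
  rfl

def reflectionInducedAct : DihedralGroup n → DihedralGroup n → DihedralGroup n
  | r k, r _ => r k
  | r k, sr _ => r (-k)
  | sr k, r m => sr (k + m)
  | sr k, sr m => sr (m - k - i)

-- With `u = sr 0` the image of the generator `sr i` of `P`, `sr k` stands for `u ^ r k` and
-- `r k` for `u * u ^ r k`.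
def reflectionInducedCM : CrossedModule (DihedralGroup n) (DihedralGroup n) where
  μ := reflectionInducedBoundary i
  act := reflectionInducedAct i
  act_mul := by
    rintro (a | a) (b | b) (p | p) <;>
      simp only [r_mul_r, r_mul_sr, sr_mul_r, sr_mul_sr, reflectionInducedAct] <;> congr 1 <;> ring
  act_one := by
    rintro (a | a) <;> simp only [one_def, reflectionInducedAct, add_zero]
  act_act := by
    rintro (a | a) (p | p) (q | q) <;>
      simp only [r_mul_r, r_mul_sr, sr_mul_r, sr_mul_sr, reflectionInducedAct] <;> congr 1 <;> ring
  cm1 := by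
    rintro (a | a) (p | p) <;>
      simp only [inv_r, inv_sr, r_mul_r, r_mul_sr, sr_mul_r, sr_mul_sr, reflectionInducedAct,
        reflectionInducedBoundary_r, reflectionInducedBoundary_sr] <;> congr 1 <;> ring
  cm2 := by
    rintro (a | a) (p | p) <;>
      simp only [inv_r, inv_sr, r_mul_r, r_mul_sr, sr_mul_r, sr_mul_sr, reflectionInducedAct,
        reflectionInducedBoundary_r, reflectionInducedBoundary_sr] <;> congr 1 <;> ring

def reflectionInducedMap : Subgroup.zpowers (sr i) →* DihedralGroup n :=
  (shiftReflections (-i)).comp (Subgroup.zpowers (sr i)).subtype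

@[simp]
theorem reflectionInducedMap_sr : reflectionInducedMap i ⟨sr i, Subgroup.mem_zpowers _⟩ = sr 0 :=
  congrArg sr (add_neg_cancel i)

theorem reflectionInducedMap_isMorphism :
    (conjCM _).IsMorphism (reflectionInducedCM i) (reflectionInducedMap i)
      (Subgroup.zpowers (sr i)).subtype := by
  refine ⟨fun m => ?_, fun m p => ?_⟩
  · rcases eq_one_or_eq_sr_of_mem_zpowers m with rfl | rfl
    · simp
    · rw [reflectionInducedMap_sr]
      exact congrArg sr (by simp)
  · rw [conjCM_act_of_isMulCommutative]
    rcases eq_one_or_eq_sr_of_mem_zpowers m with rfl | rfl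
    · rw [map_one, CrossedModule.act_one_left]
    · rcases eq_one_or_eq_sr_of_mem_zpowers p with rfl | rfl
      · rw [map_one, CrossedModule.act_one]
      · rw [reflectionInducedMap_sr]
        exact congrArg sr (by simp)

section UniversalProperty

variable {i} {N : Type} [Group N] (Z : CrossedModule N (DihedralGroup n)) {u : N}

theorem act_act_r_sr (hfix : Z.act u (sr i) = u) (k m : ZMod n) :
    Z.act (Z.act u (r k)) (sr m) = Z.act u (r (m - k - i)) := by
  rw [Z.act_act, r_mul_sr, show sr (m - k) = sr i * r (m - k - i) by rw [sr_mul_r]; congr 1; ring,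
    ← Z.act_act, hfix]

theorem μ_act_r (hμ : Z.μ u = sr i) (k : ZMod n) : Z.μ (Z.act u (r k)) = sr (i + k + k) := by
  rw [Z.cm1, hμ, inv_r, r_mul_sr, sr_mul_r]
  congr 1
  ring

theorem isReflectionFamily_act_r (hμ : Z.μ u = sr i) (hfix : Z.act u (sr i) = u)
    (hu : u * u = 1) : IsReflectionFamily fun k => Z.act u (r k) := by
  intro a b
  beta_reduce
  have hinv : (Z.act u (r b))⁻¹ = Z.act u (r b) :=
    inv_eq_of_mul_eq_one_right (by rw [← Z.act_mul, hu, Z.act_one_left])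
  nth_rewrite 1 [← hinv]
  rw [← Z.cm2, μ_act_r Z hμ, act_act_r_sr Z hfix]
  congr 2
  ring

end UniversalProperty

theorem reflectionInducedCM_isInduced :
    IsInducedCrossedModule (conjCM _) (Subgroup.zpowers (sr i)).subtype (reflectionInducedCM i)
      (reflectionInducedMap i) := by
  refine ⟨reflectionInducedMap_isMorphism i, fun N _ Z f hf => ?_⟩
  set t : Subgroup.zpowers (sr i) := ⟨sr i, Subgroup.mem_zpowers _⟩
  have hμ : Z.μ (f t) = sr i := hf.1 t
  have hfix : Z.act (f t) (sr i) = f t := by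
    simpa [conjCM_act_of_isMulCommutative] using (hf.2 t t).symm
  have hu : f t * f t = 1 := by
    rw [← map_mul, show t * t = 1 from Subtype.ext (sr_mul_self i), map_one]
  let φ := liftReflections _ (isReflectionFamily_act_r Z hμ hfix hu)
  have hφ_sr (k : ZMod n) : φ (sr k) = Z.act (f t) (r k) := rfl
  have hφ_act_sr (k : ZMod n) (q : DihedralGroup n) :
      φ ((reflectionInducedCM i).act (sr k) q) = Z.act (φ (sr k)) q := by
    rcases q with m | m
    · exact ((Z.act_act _ _ _).trans (congrArg _ (r_mul_r k m))).symm
    · exact (act_act_r_sr Z hfix k m).symm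
  refine ⟨φ, ⟨fun x => ?_, fun x q => ?_, fun m => ?_⟩, fun ψ ⟨_, hψact, hψj⟩ => ?_⟩
  · rcases x with k | k
    · change Z.μ (_ * _) = r (k + k)
      rw [map_mul, μ_act_r Z hμ, μ_act_r Z hμ, sr_mul_sr]
      congr 1
      ring
    · exact μ_act_r Z hμ k
  · rcases x with k | k
    · rw [← sub_zero k, ← sr_mul_sr, (reflectionInducedCM i).act_mul, map_mul, map_mul, Z.act_mul,
        hφ_act_sr, hφ_act_sr]
    · exact hφ_act_sr k q
  · rcases eq_one_or_eq_sr_of_mem_zpowers m with rfl | rfl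
    · simp
    · rw [reflectionInducedMap_sr, hφ_sr, ← one_def, Z.act_one]
  · refine ext_hom_sr fun k => ?_
    have hsr : sr k = (reflectionInducedCM i).act (sr 0) (r k) := congrArg sr (zero_add k).symm
    rw [congrArg ψ hsr, hψact, ← reflectionInducedMap_sr, hψj]
    rfl

theorem reflectionInducedBoundary_bijective (hn : Odd n) :
    Function.Bijective (reflectionInducedBoundary i) := by
  have : NeZero n := ⟨hn.pos.ne'⟩
  refine Finite.injective_iff_bijective.mp ((injective_iff_map_eq_one _).mpr ?_)
  rintro (k | k) h
  · rw [reflectionInducedBoundary_r, one_def, r.injEq, ZMod.add_self_eq_zero_iff_eq_zero hn] at h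
    rw [h, one_def]
  · cases (show sr (i + k + k) = r 0 from h)

section Even

variable {m : ℕ} [NeZero m] (i : ZMod (m + m))

theorem coe_ker_reflectionInducedBoundary :
    ((reflectionInducedBoundary i).ker : Set (DihedralGroup (m + m))) = {1, r m} := by
  ext (k | k)
  · simp [-r_zero, one_def, ZMod.add_self_eq_zero_iff_of_even]
  · simp [-r_zero, one_def]

theorem card_ker_reflectionInducedBoundary : Nat.card (reflectionInducedBoundary i).ker = 2 := by
  have hm : (m : ZMod (m + m)) ≠ 0 := by
    rw [Ne, ZMod.natCast_eq_zero_iff]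
    exact fun h => NeZero.ne m (by simpa using Nat.le_of_dvd (NeZero.pos m) h)
  rw [← SetLike.coe_sort_coe, coe_ker_reflectionInducedBoundary, Nat.card_coe_set_eq,
    Set.ncard_pair (by simpa [-r_zero, one_def] using hm.symm)]

theorem index_range_reflectionInducedBoundary : (reflectionInducedBoundary i).range.index = 2 := by
  have hker := (reflectionInducedBoundary i).ker.card_mul_index
  have hrange := (reflectionInducedBoundary i).range.card_mul_index
  rw [Subgroup.index_ker, card_ker_reflectionInducedBoundary, nat_card] at hker
  rw [nat_card] at hrange
  have := NeZero.pos m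
  nlinarith

end Even

end DihedralGroup

/-- Let `Q = D_{2n}` (`n ≥ 1`) be the dihedral group of order `2n`, `P` the subgroup of
order 2 generated by a reflection `sr i`, and consider the identity crossed module on `P`
and the inclusion `ι : P → Q`.  For any induced crossed module `(∂ : I → Q, j)` of
`(id_P : P → P)` along `ι`, the group `I` is isomorphic to `D_{2n}`; if `n` is odd then
`∂` is an isomorphism, while if `n` is even then `ker ∂` has order 2 and the image of `∂`
has index 2 in `Q`. -/
theorem induced_reflection_dihedral {n : ℕ} (hn : 1 ≤ n) (i : ZMod n)
    (P : Subgroup (DihedralGroup n)) (hP : P = Subgroup.zpowers (DihedralGroup.sr i))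
    {I : Type} [Group I] (Y : CrossedModule I (DihedralGroup n)) (j : ↥P →* I)
    (hInd : IsInducedCrossedModule (conjCM ↥P) P.subtype Y j) :
    Nonempty (I ≃* DihedralGroup n) ∧
    (Odd n → Function.Bijective Y.μ) ∧
    (Even n → Nat.card Y.μ.ker = 2 ∧ Y.μ.range.index = 2) := by
  subst hP
  obtain ⟨e, he⟩ := hInd.exists_mulEquiv (DihedralGroup.reflectionInducedCM_isInduced i)
  have hμ : Y.μ = (DihedralGroup.reflectionInducedBoundary i).comp (e : I →* DihedralGroup n) :=
    MonoidHom.ext fun x => (he x).symm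
  refine ⟨⟨e⟩, fun hodd => ?_, fun heven => ?_⟩
  · rw [hμ]
    exact (DihedralGroup.reflectionInducedBoundary_bijective i hodd).comp e.bijective
  · obtain ⟨m, rfl⟩ := heven
    have : NeZero m := ⟨by omega⟩
    rw [hμ, MonoidHom.ker_comp_mulEquiv, Subgroup.card_map_of_injective e.symm.injective,
      MonoidHom.range_comp, e.range_eq_top, ← MonoidHom.range_eq_map]
    exact ⟨DihedralGroup.card_ker_reflectionInducedBoundary i,
      DihedralGroup.index_range_reflectionInducedBoundary i⟩
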